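/- arXiv:1006.0543 — 2 statements merged into one kernel-verified Lean document; each statement's English description precedes it below -/
import Mathlib

section
/- Let z ∈ ℂ with z ≠ 0, z ≠ 1 and 1 − z + z² ≠ 0, and let A be the configuration matrix of the three points z₁ = 0, z₂ = 1, z₃ = z. Then the kernel of A is one-dimensional and is spanned by the vector (1/(z−1), −1/z, 1): every Γ ∈ ℂ³ with A·Γ = 0 is a complex scalar multiple of (1/(z−1), −1/z, 1). -/
open Matrix BigOperators Polynomial

/-- The configuration matrix of `N` points in the plane:
`A α α = 0`, `A α β = 1 / (z α - z β)` for `α ≠ β`. -/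
noncomputable def configMatrix {N : ℕ} (z : Fin N → ℂ) : Matrix (Fin N) (Fin N) ℂ :=
  Matrix.of fun α β => if α = β then 0 else 1 / (z α - z β)

/-!
The configuration matrix is skew-symmetric with zero diagonal, and such a `3 × 3` matrix acts
as `w ↦ ω ⨯₃ w`, where `ω` is its axial vector. Over a field, `ω ⨯₃ w = 0` forces `w` to be a
multiple of `ω` as soon as `ω ≠ 0`, so the kernel is the line through `ω`. For the points
`0, 1, z` the axial vector is `(1/(z-1), -1/z, 1)`.
-/

section AxialVector

def axialVector {R : Type*} (A : Matrix (Fin 3) (Fin 3) R) : Fin 3 → R :=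
  ![A 2 1, A 0 2, A 1 0]

theorem mulVec_eq_axialVector_cross {R : Type*} [CommRing R] {A : Matrix (Fin 3) (Fin 3) R}
    (hA : Aᵀ = -A) (hdiag : ∀ i, A i i = 0) (w : Fin 3 → R) :
    A *ᵥ w = axialVector A ⨯₃ w := by
  have hskew : ∀ i j, A j i = -A i j := fun i j => by
    simpa using congr_fun (congr_fun hA i) j
  ext i
  fin_cases i <;>
    simp [axialVector, cross_apply, mulVec, dotProduct, Fin.sum_univ_three, hdiag,
      hskew 0 1, hskew 0 2, hskew 1 2] <;> ring

theorem crossProduct_eq_zero_iff_mem_span_singleton {K : Type*} [Field K] {v w : Fin 3 → K}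
    (hv : v ≠ 0) : v ⨯₃ w = 0 ↔ w ∈ K ∙ v := by
  rw [← not_iff_not, ← ne_eq, crossProduct_ne_zero_iff_linearIndependent,
    LinearIndependent.pair_iff' hv, Submodule.mem_span_singleton, not_exists]

theorem ker_mulVecLin_eq_span_axialVector {K : Type*} [Field K] {A : Matrix (Fin 3) (Fin 3) K}
    (hA : Aᵀ = -A) (hdiag : ∀ i, A i i = 0) (hω : axialVector A ≠ 0) :
    LinearMap.ker A.mulVecLin = K ∙ axialVector A := by
  ext w
  rw [LinearMap.mem_ker, mulVecLin_apply, mulVec_eq_axialVector_cross hA hdiag,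
    crossProduct_eq_zero_iff_mem_span_singleton hω]

end AxialVector

section ConfigMatrix

theorem configMatrix_transpose {N : ℕ} (z : Fin N → ℂ) :
    (configMatrix z)ᵀ = -configMatrix z := by
  ext α β
  by_cases h : α = β
  · simp [configMatrix, h]
  · rw [transpose_apply, Matrix.neg_apply]
    simp only [configMatrix, of_apply, if_neg h, if_neg (Ne.symm h)]
    rw [← neg_sub, one_div_neg_eq_neg_one_div]

theorem configMatrix_apply_self {N : ℕ} (z : Fin N → ℂ) (α : Fin N) : configMatrix z α α = 0 := by
  simp [configMatrix]

theorem axialVector_configMatrix_zero_one (z : ℂ) :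
    axialVector (configMatrix ![0, 1, z]) = ![1 / (z - 1), -(1 / z), 1] := by
  ext i
  fin_cases i <;> simp [axialVector, configMatrix]

end ConfigMatrix

theorem kernel_configMatrix_zero_one_z_general (z : ℂ) :
    Module.finrank ℂ (LinearMap.ker (configMatrix ![0, 1, z]).mulVecLin) = 1 ∧
    (configMatrix ![0, 1, z]).mulVec ![1 / (z - 1), -(1 / z), 1] = 0 ∧
    ∀ Γ : Fin 3 → ℂ, (configMatrix ![0, 1, z]).mulVec Γ = 0 →
      ∃ c : ℂ, Γ = c • ![1 / (z - 1), -(1 / z), 1] := by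
  rw [← axialVector_configMatrix_zero_one]
  have hω : axialVector (configMatrix ![0, 1, z]) ≠ 0 := fun h => by
    simpa [axialVector_configMatrix_zero_one] using congr_fun h 2
  have hker := ker_mulVecLin_eq_span_axialVector (configMatrix_transpose _)
    (configMatrix_apply_self _) hω
  refine ⟨hker ▸ finrank_span_singleton hω, ?_, fun Γ hΓ => ?_⟩
  · exact LinearMap.mem_ker.mp (hker ▸ Submodule.mem_span_singleton_self _)
  · obtain ⟨c, hc⟩ := Submodule.mem_span_singleton.mp (hker ▸ LinearMap.mem_ker.mpr hΓ)
    exact ⟨c, hc.symm⟩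

/-- For the points `0, 1, z` (with `z ≠ 0, 1` and `1 - z + z² ≠ 0`), the kernel
of the configuration matrix is one-dimensional, spanned by `(1/(z−1), −1/z, 1)`. -/
theorem kernel_configMatrix_zero_one_z
    (z : ℂ) (h0 : z ≠ 0) (h1 : z ≠ 1) (hq : 1 - z + z ^ 2 ≠ 0) :
    Module.finrank ℂ (LinearMap.ker (configMatrix ![0, 1, z]).mulVecLin) = 1 ∧
    (configMatrix ![0, 1, z]).mulVec ![1 / (z - 1), -(1 / z), 1] = 0 ∧
    ∀ Γ : Fin 3 → ℂ, (configMatrix ![0, 1, z]).mulVec Γ = 0 →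
      ∃ c : ℂ, Γ = c • ![1 / (z - 1), -(1 / z), 1] :=
  kernel_configMatrix_zero_one_z_general z
end

section
/- Let x₁ < x₂ < x₃ be real numbers and let A be the configuration matrix of the collinear points z₁ = x₁, z₂ = x₂, z₃ = x₃. Then the kernel of A is one-dimensional and is spanned by the real vector Γ = (1, −(x₃−x₂)/(x₃−x₁), (x₃−x₂)/(x₂−x₁)); in particular A·Γ = 0, so this Γ makes the collinear configuration a fixed equilibrium of point vortices. -/
/-!
For any three distinct points `z₀, z₁, z₂ ∈ ℂ` (collinear or not), the last two rows of
`A Γ = 0` each involve two nonzero entries of `A`, so they determine `Γ₁` and `Γ₂` as multiples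
of `Γ₀`: the kernel has dimension at most one. The resulting vector also satisfies the first row,
since `1 / ((z₂ - z₀)(z₀ - z₁)) = 1 / ((z₁ - z₀)(z₀ - z₂))`.
-/

open Matrix BigOperators Polynomial

noncomputable def equilibriumStrength (z : Fin 3 → ℂ) : Fin 3 → ℂ :=
  ![1, -((z 2 - z 1) / (z 2 - z 0)), (z 2 - z 1) / (z 1 - z 0)]

theorem configMatrix_three_mulVec (z Γ : Fin 3 → ℂ) :
    configMatrix z *ᵥ Γ =
      ![Γ 1 / (z 0 - z 1) + Γ 2 / (z 0 - z 2),
        Γ 0 / (z 1 - z 0) + Γ 2 / (z 1 - z 2),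
        Γ 0 / (z 2 - z 0) + Γ 1 / (z 2 - z 1)] := by
  ext i
  fin_cases i <;>
    simp [configMatrix, mulVec, dotProduct, Fin.sum_univ_three, div_eq_mul_inv] <;> ring

section ThreePoints

variable {z : Fin 3 → ℂ}

theorem configMatrix_mulVec_equilibriumStrength (hz : Function.Injective z) :
    configMatrix z *ᵥ equilibriumStrength z = 0 := by
  have h01 : z 0 - z 1 ≠ 0 := sub_ne_zero.mpr (hz.ne (by decide))
  have h02 : z 0 - z 2 ≠ 0 := sub_ne_zero.mpr (hz.ne (by decide))
  have h12 : z 1 - z 2 ≠ 0 := sub_ne_zero.mpr (hz.ne (by decide))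
  have h10 : z 1 - z 0 ≠ 0 := sub_ne_zero.mpr (hz.ne (by decide))
  have h20 : z 2 - z 0 ≠ 0 := sub_ne_zero.mpr (hz.ne (by decide))
  have h21 : z 2 - z 1 ≠ 0 := sub_ne_zero.mpr (hz.ne (by decide))
  rw [configMatrix_three_mulVec]
  ext i
  fin_cases i <;> simp [equilibriumStrength] <;> field_simp <;> ring

theorem eq_smul_equilibriumStrength_of_mulVec_eq_zero (hz : Function.Injective z)
    {Γ : Fin 3 → ℂ} (hΓ : configMatrix z *ᵥ Γ = 0) : Γ = Γ 0 • equilibriumStrength z := by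
  rw [configMatrix_three_mulVec] at hΓ
  have h10 : z 1 - z 0 ≠ 0 := sub_ne_zero.mpr (hz.ne (by decide))
  have h12 : z 1 - z 2 ≠ 0 := sub_ne_zero.mpr (hz.ne (by decide))
  have h20 : z 2 - z 0 ≠ 0 := sub_ne_zero.mpr (hz.ne (by decide))
  have h21 : z 2 - z 1 ≠ 0 := sub_ne_zero.mpr (hz.ne (by decide))
  have row1 := congrFun hΓ 1
  have row2 := congrFun hΓ 2
  simp only [Fin.isValue, cons_val_one, cons_val_zero, cons_val, Pi.zero_apply] at row1 row2
  field_simp at row1 row2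
  ext i
  fin_cases i <;> simp [equilibriumStrength] <;> field_simp
  · linear_combination row2
  · linear_combination row1

theorem ker_configMatrix_three_eq_span (hz : Function.Injective z) :
    LinearMap.ker (configMatrix z).mulVecLin = Submodule.span ℂ {equilibriumStrength z} := by
  ext Γ
  rw [LinearMap.mem_ker, mulVecLin_apply, Submodule.mem_span_singleton]
  constructor
  · exact fun hΓ => ⟨Γ 0, (eq_smul_equilibriumStrength_of_mulVec_eq_zero hz hΓ).symm⟩
  · rintro ⟨c, rfl⟩
    rw [mulVec_smul, configMatrix_mulVec_equilibriumStrength hz, smul_zero]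

theorem finrank_ker_configMatrix_three (hz : Function.Injective z) :
    Module.finrank ℂ (LinearMap.ker (configMatrix z).mulVecLin) = 1 := by
  rw [ker_configMatrix_three_eq_span hz, finrank_span_singleton]
  exact fun h => one_ne_zero (congrFun h 0)

end ThreePoints

/-- For three collinear points `x₁ < x₂ < x₃` on the real axis, the kernel of
the configuration matrix is one-dimensional and spanned by the real vector
`(1, −(x₃−x₂)/(x₃−x₁), (x₃−x₂)/(x₂−x₁))`, which is an equilibrium strength
vector of point vortices. -/
theorem collinear_three_kernel
    (x₁ x₂ x₃ : ℝ) (h12 : x₁ < x₂) (h23 : x₂ < x₃) :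
    (configMatrix ![(x₁ : ℂ), (x₂ : ℂ), (x₃ : ℂ)]).mulVec
        ![1, -(((x₃ : ℂ) - x₂) / ((x₃ : ℂ) - x₁)), ((x₃ : ℂ) - x₂) / ((x₂ : ℂ) - x₁)] = 0 ∧
    Module.finrank ℂ
        (LinearMap.ker (configMatrix ![(x₁ : ℂ), (x₂ : ℂ), (x₃ : ℂ)]).mulVecLin) = 1 ∧
    ∀ Γ : Fin 3 → ℂ, (configMatrix ![(x₁ : ℂ), (x₂ : ℂ), (x₃ : ℂ)]).mulVec Γ = 0 →
      ∃ c : ℂ, Γ = c •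
        ![1, -(((x₃ : ℂ) - x₂) / ((x₃ : ℂ) - x₁)), ((x₃ : ℂ) - x₂) / ((x₂ : ℂ) - x₁)] := by
  have hz : Function.Injective ![(x₁ : ℂ), (x₂ : ℂ), (x₃ : ℂ)] := by
    have h13 := h12.trans h23
    intro i j hij
    fin_cases i <;> fin_cases j <;> simp_all [h12.ne, h23.ne, h13.ne, h12.ne', h23.ne', h13.ne']
  exact ⟨configMatrix_mulVec_equilibriumStrength hz, finrank_ker_configMatrix_three hz,
    fun Γ hΓ => ⟨Γ 0, eq_smul_equilibriumStrength_of_mulVec_eq_zero hz hΓ⟩⟩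
end
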